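/- Fix n ≥ 1 and 1 ≤ p ≤ n. Let J_p = {α ∈ Reg(ORCT_n) : |Im α| = p}, let R_η = {α ∈ J_p : α is order-preserving and Im α = {1,…,p}}, and let L_{δ*} = {α ∈ J_p : α is order-reversing and the kernel classes of α are {1}, …, {p−1}, {p,…,n}}. Then the subsemigroup generated by R_η ∪ L_{δ*} contains all of J_p. -/

import Mathlib

/-!
After composing with the reversal `x ↦ n - 1 - x` when it is order-reversing, a regular element
of `ORCT n` of rank `p` becomes an order-preserving contraction `α` with a contraction `γ` such
that `α γ α = α`. For `s = γ (α ⊥)` and `s' = γ (α ⊤)` the two contraction inequalities force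
`s' - s = α ⊤ - α ⊥`, so `α` is an isometry on `[s, s']` and constant outside it:
`α x = a + min (x - s) (p - 1)`. Writing `η_s x = min (x - s) (p - 1)` (`shiftClamp`, in `R_η`) and
`δ_c x = c - min x (p - 1)` (`reflectClamp`, in `L_{δ*}`), such a map is `δ_{a+p-1} δ_{p-1} η_s`
and its reversal is `δ_{n-1-a} η_s`.
-/

/-- `α` is a (full) contraction of the chain `{1, …, n}` (modelled as `Fin n`):
`|xα - yα| ≤ |x - y|` for all `x, y`. -/
def IsContraction {n : ℕ} (α : Function.End (Fin n)) : Prop :=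
  ∀ x y : Fin n, |((α x : ℕ) : ℤ) - ((α y : ℕ) : ℤ)| ≤ |((x : ℕ) : ℤ) - ((y : ℕ) : ℤ)|

/-- `OCT n`: the order-preserving full contractions of the chain. -/
def OCT (n : ℕ) : Set (Function.End (Fin n)) :=
  {α | IsContraction α ∧ Monotone α}

/-- `ORCT n`: the order-preserving or order-reversing full contractions of the chain. -/
def ORCT (n : ℕ) : Set (Function.End (Fin n)) :=
  {α | IsContraction α ∧ (Monotone α ∨ Antitone α)}

/-- The regular elements of `OCT n`. -/
def RegOCT (n : ℕ) : Set (Function.End (Fin n)) :=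
  {α | α ∈ OCT n ∧ ∃ β ∈ OCT n, α * β * α = α}

/-- The regular elements of `ORCT n`. -/
def RegORCT (n : ℕ) : Set (Function.End (Fin n)) :=
  {α | α ∈ ORCT n ∧ ∃ β ∈ ORCT n, α * β * α = α}

/-- `|Im α|`, the rank of a transformation. -/
noncomputable def imCard {n : ℕ} (α : Function.End (Fin n)) : ℕ :=
  (Set.range α).ncard

/-- `J_p`: the elements of `Reg(ORCT_n)` of rank exactly `p`. -/
def Jp (n p : ℕ) : Set (Function.End (Fin n)) :=
  {α | α ∈ RegORCT n ∧ imCard α = p}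

/-- `R_η`: the order-preserving elements of `J_p` whose image is `{1, …, p}`
(i.e. `{0, …, p-1}` in `Fin n`). -/
def RetaJ (n p : ℕ) : Set (Function.End (Fin n)) :=
  {α | α ∈ Jp n p ∧ Monotone α ∧ Set.range α = {x : Fin n | (x : ℕ) < p}}

/-- `L_{δ*}`: the order-reversing elements of `J_p` whose kernel classes are
`{1}, …, {p-1}, {p, …, n}` (in `Fin n`: singletons `{0}, …, {p-2}` together with the
block of indices `≥ p - 1`). -/
def LdeltaStar (n p : ℕ) : Set (Function.End (Fin n)) :=
  {α | α ∈ Jp n p ∧ Antitone α ∧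
    ∀ x y : Fin n, α x = α y ↔ (x = y ∨ (p - 1 ≤ (x : ℕ) ∧ p - 1 ≤ (y : ℕ)))}

@[simp]
lemma Function.End.mul_apply {α : Type*} (f g : Function.End α) (a : α) : (f * g) a = f (g a) :=
  rfl

section

variable {n : ℕ}

lemma isContraction_iff_natAbs {α : Function.End (Fin n)} :
    IsContraction α ↔ ∀ x y : Fin n,
      (((α x : ℕ) : ℤ) - (α y : ℕ)).natAbs ≤ (((x : ℕ) : ℤ) - (y : ℕ)).natAbs := by
  simp only [IsContraction, Int.abs_eq_natAbs, Nat.cast_le]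

lemma IsContraction.mul {α β : Function.End (Fin n)} (hα : IsContraction α)
    (hβ : IsContraction β) : IsContraction (α * β) :=
  fun x y => (hα (β x) (β y)).trans (hβ x y)

lemma mul_mem_ORCT {α β : Function.End (Fin n)} (hα : α ∈ ORCT n) (hβ : β ∈ ORCT n) :
    α * β ∈ ORCT n := by
  refine ⟨hα.1.mul hβ.1, ?_⟩
  rcases hα.2 with hα | hα <;> rcases hβ.2 with hβ | hβ
  exacts [Or.inl (hα.comp hβ), Or.inr (hα.comp_antitone hβ), Or.inr (hα.comp_monotone hβ),
    Or.inl (hα.comp hβ)]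

def revEnd (n : ℕ) : Function.End (Fin n) := Fin.rev

@[simp]
lemma revEnd_apply (x : Fin n) : revEnd n x = x.rev :=
  rfl

lemma revEnd_mem_ORCT : revEnd n ∈ ORCT n := by
  refine ⟨isContraction_iff_natAbs.2 fun x y => ?_, Or.inr Fin.rev_anti⟩
  simp only [revEnd_apply, Fin.val_rev]
  omega

lemma revEnd_mul_revEnd : revEnd n * revEnd n = 1 :=
  funext Fin.rev_rev

lemma revEnd_mul_mem_RegORCT {α : Function.End (Fin n)} (hα : α ∈ RegORCT n) :
    revEnd n * α ∈ RegORCT n := by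
  obtain ⟨hα, β, hβ, hαβ⟩ := hα
  refine ⟨mul_mem_ORCT revEnd_mem_ORCT hα, β * revEnd n, mul_mem_ORCT hβ revEnd_mem_ORCT, ?_⟩
  calc revEnd n * α * (β * revEnd n) * (revEnd n * α)
      = revEnd n * (α * β * (revEnd n * revEnd n) * α) := by simp only [mul_assoc]
    _ = revEnd n * α := by rw [revEnd_mul_revEnd, mul_one, hαβ]

lemma imCard_revEnd_mul (α : Function.End (Fin n)) : imCard (revEnd n * α) = imCard α := by
  rw [imCard, imCard, ← Set.ncard_image_of_injective (Set.range α) Fin.rev_injective]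
  exact congrArg Set.ncard (Set.range_comp Fin.rev α)

lemma imCard_eq_of_mem_range_iff {α : Function.End (Fin n)} {a b : ℕ} (hb : b ≤ n)
    (h : ∀ v : Fin n, v ∈ Set.range α ↔ a ≤ (v : ℕ) ∧ (v : ℕ) < b) : imCard α = b - a := by
  have hval : Fin.val '' Set.range α = Finset.Ico a b := by
    ext k
    simp only [Set.mem_image, h, Finset.coe_Ico, Set.mem_Ico]
    exact ⟨fun ⟨v, hv, hvk⟩ => hvk ▸ hv, fun hk => ⟨⟨k, by omega⟩, hk, rfl⟩⟩
  rw [imCard, ← Set.ncard_image_of_injective _ Fin.val_injective, hval, Set.ncard_coe_finset,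
    Nat.card_Ico]

lemma imCard_eq_of_apply_eq_add_min {α : Function.End (Fin n)} {a t d : ℕ} (had : a + d < n)
    (htd : t + d < n) (hα : ∀ x, (α x : ℕ) = a + min ((x : ℕ) - t) d) : imCard α = d + 1 := by
  have := imCard_eq_of_mem_range_iff (α := α) (a := a) (b := a + d + 1) had fun v => by
    refine ⟨?_, fun hv => ⟨⟨t + (v - a), by omega⟩, Fin.ext ?_⟩⟩
    · rintro ⟨x, rfl⟩
      have := hα x
      omega
    · have := hα ⟨t + (v - a), by omega⟩
      simp only at this
      omega
  omega

lemma exists_apply_eq_add_min_of_monotone [NeZero n] {α : Function.End (Fin n)}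
    (hα : α ∈ RegORCT n) (hM : Monotone α) :
    ∃ a t d : ℕ, a + d < n ∧ t + d < n ∧ ∀ x, (α x : ℕ) = a + min ((x : ℕ) - t) d := by
  obtain ⟨⟨hC, -⟩, γ, ⟨hγ, -⟩, hαγ⟩ := hα
  rw [isContraction_iff_natAbs] at hC hγ
  have hfix : ∀ x, α (γ (α x)) = α x := congrFun hαγ
  set s := γ (α ⊥)
  set s' := γ (α ⊤)
  have hss' : (s : ℕ) ≤ s' ∧ (α ⊤ : ℕ) = α ⊥ + ((s' : ℕ) - s) := by
    have hbt : (α ⊥ : ℕ) ≤ α ⊤ := hM bot_le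
    have hle : s' < s → α s' ≤ α s := fun h => hM h.le
    have := hC s' s
    have := hγ (α ⊤) (α ⊥)
    simp only [s, s', hfix, Fin.lt_def, Fin.le_def] at *
    omega
  refine ⟨α ⊥, s, (s' : ℕ) - s, by omega, by omega, fun x => ?_⟩
  have := hC x s
  have := hC x s'
  have hx₁ : x ≤ s → α x ≤ α s := fun h => hM h
  have hx₂ : s' ≤ x → α s' ≤ α x := fun h => hM h
  have hx₃ : (α ⊥ : ℕ) ≤ α x ∧ (α x : ℕ) ≤ α ⊤ := ⟨hM bot_le, hM le_top⟩
  simp only [s, s', hfix, Fin.le_def] at *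
  omega

def shiftClamp (n d t : ℕ) : Function.End (Fin n) := fun x =>
  ⟨min ((x : ℕ) - t) d, by omega⟩

def reflectClamp (d : ℕ) (c : Fin n) : Function.End (Fin n) := fun x =>
  ⟨c - min (x : ℕ) d, by omega⟩

@[simp]
lemma val_shiftClamp (d t : ℕ) (x : Fin n) : (shiftClamp n d t x : ℕ) = min ((x : ℕ) - t) d :=
  rfl

@[simp]
lemma val_reflectClamp (d : ℕ) (c x : Fin n) : (reflectClamp d c x : ℕ) = c - min (x : ℕ) d :=
  rfl

lemma shiftClamp_mem_RetaJ {d t : ℕ} (htd : t + d < n) : shiftClamp n d t ∈ RetaJ n (d + 1) := by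
  have hC : IsContraction (shiftClamp n d t) :=
    isContraction_iff_natAbs.2 fun x y => by simp only [val_shiftClamp]; omega
  have hM : Monotone (shiftClamp n d t) := fun x y hxy => by
    simp only [val_shiftClamp, Fin.le_def] at hxy ⊢
    omega
  let β : Function.End (Fin n) := fun y => ⟨min ((y : ℕ) + t) (n - 1), by omega⟩
  have hβ : β ∈ ORCT n := by
    refine ⟨isContraction_iff_natAbs.2 fun x y => ?_, Or.inl fun x y hxy => ?_⟩
    all_goals simp only [β, Fin.le_def] at *; omega
  have hreg : shiftClamp n d t * β * shiftClamp n d t = shiftClamp n d t :=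
    funext fun x => Fin.ext <| by
      simp only [Function.End.mul_apply]
      simp only [β, val_shiftClamp]
      omega
  have hrank : imCard (shiftClamp n d t) = d + 1 :=
    imCard_eq_of_apply_eq_add_min (a := 0) (by omega) htd fun x => (zero_add _).symm
  refine ⟨⟨⟨⟨hC, Or.inl hM⟩, β, hβ, hreg⟩, hrank⟩, hM, ?_⟩
  ext v
  rw [Set.mem_ofPred_eq]
  refine ⟨?_, fun hv => ⟨⟨v + t, by omega⟩, Fin.ext ?_⟩⟩
  · rintro ⟨x, rfl⟩
    simp only [val_shiftClamp]
    omega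
  · simp only [val_shiftClamp]
    omega

lemma reflectClamp_mem_LdeltaStar {d : ℕ} {c : Fin n} (hdc : d ≤ c) :
    reflectClamp d c ∈ LdeltaStar n (d + 1) := by
  have hC : IsContraction (reflectClamp d c) :=
    isContraction_iff_natAbs.2 fun x y => by simp only [val_reflectClamp]; omega
  have hA : Antitone (reflectClamp d c) := fun x y hxy => by
    simp only [val_reflectClamp, Fin.le_def] at hxy ⊢
    omega
  let β : Function.End (Fin n) := fun y => ⟨c - y, by omega⟩
  have hβ : β ∈ ORCT n := by
    refine ⟨isContraction_iff_natAbs.2 fun x y => ?_, Or.inr fun x y hxy => ?_⟩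
    all_goals simp only [β, Fin.le_def] at *; omega
  have hreg : reflectClamp d c * β * reflectClamp d c = reflectClamp d c :=
    funext fun x => Fin.ext <| by
      simp only [Function.End.mul_apply]
      simp only [β, val_reflectClamp]
      omega
  have hrank : imCard (reflectClamp d c) = d + 1 := by
    rw [← imCard_revEnd_mul]
    refine imCard_eq_of_apply_eq_add_min (a := n - 1 - c) (t := 0) (by omega) (by omega) fun x => ?_
    simp only [Function.End.mul_apply, revEnd_apply, Fin.val_rev, val_reflectClamp]
    omega
  refine ⟨⟨⟨⟨hC, Or.inr hA⟩, β, hβ, hreg⟩, hrank⟩, hA, fun x y => ?_⟩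
  simp only [Fin.ext_iff, val_reflectClamp]
  omega

lemma mem_closure_of_monotone [NeZero n] {α : Function.End (Fin n)} (hα : α ∈ RegORCT n)
    (hM : Monotone α) :
    α ∈ Subsemigroup.closure (RetaJ n (imCard α) ∪ LdeltaStar n (imCard α)) := by
  obtain ⟨a, t, d, had, htd, hαf⟩ := exists_apply_eq_add_min_of_monotone hα hM
  have hfac :
      α = reflectClamp d ⟨a + d, had⟩ * (reflectClamp d ⟨d, by omega⟩ * shiftClamp n d t) := by
    funext x
    apply Fin.ext
    simp only [Function.End.mul_apply, val_reflectClamp, val_shiftClamp, hαf]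
    omega
  rw [imCard_eq_of_apply_eq_add_min had htd hαf, hfac]
  exact Subsemigroup.mul_mem _
    (Subsemigroup.subset_closure (Or.inr (reflectClamp_mem_LdeltaStar (Nat.le_add_left d a))))
    (Subsemigroup.mul_mem _
      (Subsemigroup.subset_closure (Or.inr (reflectClamp_mem_LdeltaStar le_rfl)))
      (Subsemigroup.subset_closure (Or.inl (shiftClamp_mem_RetaJ htd))))

lemma mem_closure_of_antitone [NeZero n] {α : Function.End (Fin n)} (hα : α ∈ RegORCT n)
    (hA : Antitone α) :
    α ∈ Subsemigroup.closure (RetaJ n (imCard α) ∪ LdeltaStar n (imCard α)) := by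
  obtain ⟨a, t, d, had, htd, hαf⟩ :=
    exists_apply_eq_add_min_of_monotone (revEnd_mul_mem_RegORCT hα) (Fin.rev_anti.comp hA)
  have hfac : α = reflectClamp d ⟨n - 1 - a, by omega⟩ * shiftClamp n d t := by
    funext x
    apply Fin.ext
    have := hαf x
    simp only [Function.End.mul_apply, revEnd_apply, Fin.val_rev] at this
    simp only [Function.End.mul_apply, val_reflectClamp, val_shiftClamp]
    omega
  have hdc : d ≤ n - 1 - a := by omega
  rw [← imCard_revEnd_mul, imCard_eq_of_apply_eq_add_min had htd hαf, hfac]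
  exact Subsemigroup.mul_mem _
    (Subsemigroup.subset_closure (Or.inr (reflectClamp_mem_LdeltaStar hdc)))
    (Subsemigroup.subset_closure (Or.inl (shiftClamp_mem_RetaJ htd)))

end

theorem stmt_13_general (n p : ℕ) (hn : 1 ≤ n) :
    Jp n p ⊆
      (Subsemigroup.closure (RetaJ n p ∪ LdeltaStar n p) : Set (Function.End (Fin n))) := by
  have : NeZero n := ⟨by omega⟩
  rintro α ⟨hα, rfl⟩
  rcases hα.1.2 with hM | hA
  exacts [mem_closure_of_monotone hα hM, mem_closure_of_antitone hα hA]

/-- `J_p` is contained in the subsemigroup generated by `R_η ∪ L_{δ*}`. -/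
theorem stmt_13 (n p : ℕ) (hn : 1 ≤ n) (hp1 : 1 ≤ p) (hpn : p ≤ n) :
    Jp n p ⊆
      (Subsemigroup.closure (RetaJ n p ∪ LdeltaStar n p) : Set (Function.End (Fin n))) :=
  stmt_13_general n p hn
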